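/- arXiv:2303.12306 — 5 statements merged into one kernel-verified Lean document; each statement's English description precedes it below -/
import Mathlib

section
/- For every formula φ in graded modal logic (CML) over a knowledge graph with L sub-formulas, there exists a GNN with L layers, feature dimension L, combination matrix C, relation-specific aggregation matrices A_R, bias vector b, and truncated-ReLU activation σ(x)=min(max(0,x),1), such that for every entity v and every layer i ≥ ℓ, the ℓ-th component of the layer-i representation of v equals 1 if the ℓ-th sub-formula is satisfied at v and 0 otherwise. -/
attribute [local instance] Classical.propDecidable

structure KG (V : Type) (Rel : Type) (P : Type) where
  triple : V → Rel → V → Prop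
  pred : P → V → Prop

noncomputable def KG.nbrs {V Rel P : Type} [Fintype V] (K : KG V Rel P) (r : Rel) (v : V) :
    Finset V :=
  Finset.univ.filter (fun u => K.triple u r v)

/-- Canonical depth-`L` unraveling trees: a node carries the set of satisfied
atomic predicates and, for each relation, a multiset of children. Two unraveling
trees are isomorphic (via a root-preserving, label-preserving isomorphism)
iff their canonical representations are equal. -/
def UTree (Rel P : Type) : ℕ → Type
  | 0 => Set P
  | L + 1 => Set P × (Rel → Multiset (UTree Rel P L))

noncomputable def KG.unravel {V Rel P : Type} [Fintype V] (K : KG V Rel P) :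
    (L : ℕ) → V → UTree Rel P L
  | 0, v => ({p | K.pred p v} : Set P)
  | L + 1, v => (({p | K.pred p v} : Set P), fun r => (K.nbrs r v).val.map (K.unravel L))

/-- Counting bisimilarity: isomorphic unraveling trees at every depth. -/
def Bisim {V V' Rel P : Type} [Fintype V] [Fintype V'] (K : KG V Rel P) (v : V)
    (K' : KG V' Rel P) (v' : V') : Prop :=
  ∀ L : ℕ, K.unravel L v = K'.unravel L v'

/-- Graded modal logic (CML) formulas. -/
inductive CML (Rel P : Type) : Type
  | top : CML Rel P
  | pred (p : P) : CML Rel P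
  | not (φ : CML Rel P) : CML Rel P
  | and (φ ψ : CML Rel P) : CML Rel P
  | exge (N : ℕ) (r : Rel) (φ : CML Rel P) : CML Rel P

noncomputable def CML.sat {V Rel P : Type} [Fintype V] (K : KG V Rel P) :
    CML Rel P → V → Prop
  | .top, _ => True
  | .pred p, v => K.pred p v
  | .not φ, v => ¬ CML.sat K φ v
  | .and φ ψ, v => CML.sat K φ v ∧ CML.sat K ψ v
  | .exge N r φ, v => N ≤ ((K.nbrs r v).filter (fun u => CML.sat K φ u)).card

/-- Truncated ReLU activation. -/
noncomputable def trunc (x : ℝ) : ℝ := min (max 0 x) 1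

/-! Give the network one channel per entry of `sub`. The children of `sub ℓ` sit at
smaller indices, and channel `ℓ` combines them affinely so that the truncated ReLU turns
0/1 inputs into the truth value of `sub ℓ`: `¬ψ` is `1 - xψ`, `ψ ∧ χ` is `xψ + xχ - 1`,
`∃^{≥N} r ψ` is `#{r-neighbours u with xψ u = 1} + 1 - N`, `⊤` is `1`, and an atom copies
itself. By induction on the layer `i`, every channel `ℓ < i` is exact, since its children
were already exact one layer earlier. -/

lemma trunc_eq_ite {p : Prop} [Decidable p] {x : ℝ} (h₁ : p → 1 ≤ x) (h₀ : ¬p → x ≤ 0) :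
    trunc x = if p then 1 else 0 := by
  unfold trunc
  split_ifs with hp
  · specialize h₁ hp
    rw [max_eq_right (by linarith), min_eq_right h₁]
  · rw [max_eq_left (h₀ hp), min_eq_left zero_le_one]

lemma trunc_ite (p : Prop) [Decidable p] : trunc (if p then 1 else 0) = if p then 1 else 0 :=
  trunc_eq_ite (fun h => by simp [h]) (fun h => by simp [h])

section FirstIndex

variable {α : Type} {L : ℕ} (sub : Fin L → α)

def IsFirstIndex (a : α) (k : Fin L) : Prop :=
  sub k = a ∧ ∀ j < k, sub j ≠ a

lemma exists_isFirstIndex_le {a : α} {k : Fin L} (hk : sub k = a) :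
    ∃ k₀ ≤ k, IsFirstIndex sub a k₀ := by
  obtain ⟨k₀, hk₀, hmin⟩ :=
    (Finset.univ.filter (sub · = a)).exists_min_image id ⟨k, by simpa using hk⟩
  simp only [Finset.mem_filter, Finset.mem_univ, true_and, id] at hk₀ hmin
  exact ⟨k₀, hmin k hk, hk₀, fun j hj hja => (hmin j hja).not_gt hj⟩

lemma IsFirstIndex.unique {a : α} {j k : Fin L} (hj : IsFirstIndex sub a j)
    (hk : IsFirstIndex sub a k) : j = k := by
  rcases lt_trichotomy j k with h | h | h
  · exact absurd hj.1 (hk.2 j h)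
  · exact h
  · exact absurd hk.1 (hj.2 k h)

noncomputable def firstIndicator (a : α) (j : Fin L) : ℝ :=
  if IsFirstIndex sub a j then 1 else 0

lemma sum_mul_firstIndicator {a : α} {k : Fin L} (hk : IsFirstIndex sub a k) (x : Fin L → ℝ) :
    ∑ j, x j * firstIndicator sub a j = x k := by
  have hind : ∀ j, firstIndicator sub a j = if j = k then 1 else 0 := fun j => by
    unfold firstIndicator
    exact if_congr ⟨fun hj => hj.unique sub hk, fun h => h ▸ hk⟩ rfl rfl
  simp [hind]

end FirstIndex

section GNN

variable {V Rel P : Type} [Fintype V] [Fintype Rel] {L : ℕ}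

noncomputable def KG.preact (K : KG V Rel P) (C : Fin L → Fin L → ℝ)
    (A : Rel → Fin L → Fin L → ℝ) (b : Fin L → ℝ) (x : V → Fin L → ℝ) (v : V) (ℓ : Fin L) : ℝ :=
  (∑ j, x v j * C j ℓ) + (∑ r : Rel, ∑ u ∈ K.nbrs r v, ∑ j, x u j * A r j ℓ) + b ℓ

noncomputable def KG.gnnRun (K : KG V Rel P) (C : Fin L → Fin L → ℝ)
    (A : Rel → Fin L → Fin L → ℝ) (b : Fin L → ℝ) (e₀ : V → Fin L → ℝ) : ℕ → V → Fin L → ℝ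
  | 0 => e₀
  | i + 1 => fun v ℓ => trunc (K.preact C A b (K.gnnRun C A b e₀ i) v ℓ)

end GNN

namespace CML

variable {Rel P : Type} {L : ℕ} (sub : Fin L → CML Rel P)

structure ChildrenPrecede : Prop where
  of_not : ∀ (ℓ : Fin L) (ψ : CML Rel P), sub ℓ = .not ψ → ∃ k < ℓ, sub k = ψ
  of_and : ∀ (ℓ : Fin L) (ψ χ : CML Rel P), sub ℓ = .and ψ χ →
    (∃ j < ℓ, sub j = ψ) ∧ (∃ k < ℓ, sub k = χ)
  of_exge : ∀ (ℓ : Fin L) (N : ℕ) (r : Rel) (ψ : CML Rel P), sub ℓ = .exge N r ψ →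
    ∃ k < ℓ, sub k = ψ

/- Column `ℓ` of the weights reads each child of `sub ℓ` at its first index only, so that a
formula listed several times in `sub` is still counted once. -/
noncomputable def combMat (j ℓ : Fin L) : ℝ :=
  match sub ℓ with
  | .pred _ => if j = ℓ then 1 else 0
  | .not ψ => -firstIndicator sub ψ j
  | .and ψ χ => firstIndicator sub ψ j + firstIndicator sub χ j
  | _ => 0

noncomputable def relMat (r : Rel) (j ℓ : Fin L) : ℝ :=
  match sub ℓ with
  | .exge _ r' ψ => if r = r' then firstIndicator sub ψ j else 0
  | _ => 0

noncomputable def bias (ℓ : Fin L) : ℝ :=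
  match sub ℓ with
  | .top => 1
  | .pred _ => 0
  | .not _ => 1
  | .and _ _ => -1
  | .exge N _ _ => 1 - N

variable {V : Type} [Fintype V] [Fintype Rel] (K : KG V Rel P)

noncomputable def atomFeat (v : V) (ℓ : Fin L) : ℝ :=
  if ∃ p, sub ℓ = .pred p ∧ K.pred p v then 1 else 0

noncomputable def encoder : ℕ → V → Fin L → ℝ :=
  K.gnnRun (combMat sub) (relMat sub) (bias sub) (atomFeat sub K)

lemma encoder_succ (i : ℕ) (v : V) (ℓ : Fin L) :
    encoder sub K (i + 1) v ℓ =
      trunc (K.preact (combMat sub) (relMat sub) (bias sub) (encoder sub K i) v ℓ) :=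
  rfl

variable {sub} (x : V → Fin L → ℝ) (v : V) {ℓ : Fin L}

lemma preact_of_top (hs : sub ℓ = .top) :
    K.preact (combMat sub) (relMat sub) (bias sub) x v ℓ = 1 := by
  simp [KG.preact, combMat, relMat, bias, hs]

lemma preact_of_pred {p : P} (hs : sub ℓ = .pred p) :
    K.preact (combMat sub) (relMat sub) (bias sub) x v ℓ = x v ℓ := by
  simp [KG.preact, combMat, relMat, bias, hs]

lemma preact_of_not {ψ : CML Rel P} {k : Fin L} (hs : sub ℓ = .not ψ)
    (hk : IsFirstIndex sub ψ k) :
    K.preact (combMat sub) (relMat sub) (bias sub) x v ℓ = 1 - x v k := by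
  simp only [KG.preact, combMat, relMat, bias, hs, mul_neg, Finset.sum_neg_distrib,
    sum_mul_firstIndicator sub hk, mul_zero, Finset.sum_const_zero]
  ring

lemma preact_of_and {ψ χ : CML Rel P} {j k : Fin L} (hs : sub ℓ = .and ψ χ)
    (hj : IsFirstIndex sub ψ j) (hk : IsFirstIndex sub χ k) :
    K.preact (combMat sub) (relMat sub) (bias sub) x v ℓ = x v j + x v k - 1 := by
  simp only [KG.preact, combMat, relMat, bias, hs, mul_add, Finset.sum_add_distrib,
    sum_mul_firstIndicator sub hj, sum_mul_firstIndicator sub hk, mul_zero,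
    Finset.sum_const_zero]
  ring

lemma preact_of_exge {N : ℕ} {r : Rel} {ψ : CML Rel P} {k : Fin L}
    (hs : sub ℓ = .exge N r ψ) (hk : IsFirstIndex sub ψ k) :
    K.preact (combMat sub) (relMat sub) (bias sub) x v ℓ =
      (∑ u ∈ K.nbrs r v, x u k) + 1 - N := by
  simp only [KG.preact, combMat, relMat, bias, hs, mul_zero, Finset.sum_const_zero, mul_ite,
    Finset.sum_ite_irrel, sum_mul_firstIndicator sub hk, Finset.sum_ite_eq', Finset.mem_univ,
    if_true]
  ring

lemma trunc_preact_eq_sat (hsub : ChildrenPrecede sub)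
    (hx : ∀ k < ℓ, ∀ u, x u k = if (sub k).sat K u then 1 else 0)
    (hpred : ∀ p, sub ℓ = .pred p → x v ℓ = if (sub ℓ).sat K v then 1 else 0) :
    trunc (K.preact (combMat sub) (relMat sub) (bias sub) x v ℓ) =
      if (sub ℓ).sat K v then 1 else 0 := by
  have first (ψ : CML Rel P) (h : ∃ k < ℓ, sub k = ψ) :
      ∃ k, IsFirstIndex sub ψ k ∧ ∀ u, x u k = if ψ.sat K u then 1 else 0 := by
    obtain ⟨k, hkℓ, hk⟩ := h
    obtain ⟨k₀, hk₀k, hk₀⟩ := exists_isFirstIndex_le sub hk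
    exact ⟨k₀, hk₀, fun u => hk₀.1 ▸ hx k₀ (hk₀k.trans_lt hkℓ) u⟩
  cases hs : sub ℓ with
  | top =>
    rw [preact_of_top K x v hs]
    exact trunc_eq_ite (fun _ => le_rfl) (fun h => absurd trivial h)
  | pred p =>
    rw [preact_of_pred K x v hs, hpred p hs, hs, trunc_ite]
  | not ψ =>
    obtain ⟨k, hk, hxk⟩ := first ψ (hsub.of_not ℓ ψ hs)
    rw [preact_of_not K x v hs hk, hxk]
    refine trunc_eq_ite (fun h => ?_) (fun h => ?_) <;> simp only [sat, not_not] at h <;>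
      simp [h]
  | and ψ χ =>
    obtain ⟨hψ, hχ⟩ := hsub.of_and ℓ ψ χ hs
    obtain ⟨j, hj, hxj⟩ := first ψ hψ
    obtain ⟨k, hk, hxk⟩ := first χ hχ
    rw [preact_of_and K x v hs hj hk, hxj, hxk]
    refine trunc_eq_ite (fun h => ?_) (fun h => ?_) <;> simp only [sat] at h <;> split_ifs <;>
      norm_num <;> tauto
  | exge N r ψ =>
    obtain ⟨k, hk, hxk⟩ := first ψ (hsub.of_exge ℓ N r ψ hs)
    rw [preact_of_exge K x v hs hk]
    simp only [hxk, Finset.sum_boole]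
    refine trunc_eq_ite (fun h => ?_) (fun h => ?_) <;> simp only [sat, not_le] at h
    · linarith [(Nat.cast_le (α := ℝ)).mpr h]
    · have h' := (Nat.cast_le (α := ℝ)).mpr (Nat.succ_le_of_lt h)
      push_cast at h'
      linarith

lemma encoder_of_pred {p : P} (hs : sub ℓ = .pred p) (i : ℕ) :
    encoder sub K i v ℓ = if (sub ℓ).sat K v then 1 else 0 := by
  induction i with
  | zero => simp [encoder, KG.gnnRun, atomFeat, hs, sat]
  | succ i ih => rw [encoder_succ, preact_of_pred K _ v hs, ih, trunc_ite]

lemma encoder_eq_sat (hsub : ChildrenPrecede sub) (i : ℕ) :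
    ∀ ℓ : Fin L, (ℓ : ℕ) < i → ∀ v,
      encoder sub K i v ℓ = if (sub ℓ).sat K v then 1 else 0 := by
  induction i with
  | zero => exact fun ℓ hℓ => absurd hℓ (Nat.not_lt_zero _)
  | succ i ih =>
    intro ℓ hℓ v
    rw [encoder_succ]
    exact trunc_preact_eq_sat K _ v hsub (fun k hk => ih k (by omega))
      (fun _ hs => encoder_of_pred K v hs i)

end CML

/-- every CML formula, via an enumeration of its `L` sub-formulas
closed under the sub-formula ordering, is encoded by an `L`-dimensional GNN with
combination matrix `C`, relation matrices `A`, bias `b` and truncated ReLU: for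
every entity `v` and every layer `i` at least the (1-based) index of the
sub-formula, the corresponding component is `1` iff the sub-formula holds at `v`. -/
theorem gnn_encodes_cml {V Rel P : Type} [Fintype V] [Fintype Rel] (K : KG V Rel P)
    (L : ℕ) (sub : Fin L → CML Rel P)
    (hnot : ∀ (ℓ : Fin L) (ψ : CML Rel P), sub ℓ = CML.not ψ →
      ∃ k : Fin L, k < ℓ ∧ sub k = ψ)
    (hand : ∀ (ℓ : Fin L) (ψ χ : CML Rel P), sub ℓ = CML.and ψ χ →
      (∃ j : Fin L, j < ℓ ∧ sub j = ψ) ∧ (∃ k : Fin L, k < ℓ ∧ sub k = χ))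
    (hexge : ∀ (ℓ : Fin L) (N : ℕ) (r : Rel) (ψ : CML Rel P), sub ℓ = CML.exge N r ψ →
      ∃ k : Fin L, k < ℓ ∧ sub k = ψ) :
    ∃ (C : Fin L → Fin L → ℝ) (A : Rel → Fin L → Fin L → ℝ) (b : Fin L → ℝ)
      (e : ℕ → V → Fin L → ℝ),
      (∀ (v : V) (ℓ : Fin L),
        e 0 v ℓ = if (∃ p, sub ℓ = CML.pred p ∧ K.pred p v) then 1 else 0) ∧
      (∀ (i : ℕ) (v : V) (ℓ : Fin L), e (i + 1) v ℓ =
        trunc ((∑ j, e i v j * C j ℓ) +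
          (∑ r : Rel, ∑ u ∈ K.nbrs r v, ∑ j, e i u j * A r j ℓ) + b ℓ)) ∧
      (∀ (ℓ : Fin L) (i : ℕ), (ℓ : ℕ) < i → ∀ v : V,
        e i v ℓ = if CML.sat K (sub ℓ) v then 1 else 0) :=
  ⟨CML.combMat sub, CML.relMat sub, CML.bias sub, CML.encoder sub K, fun _ _ => rfl,
    fun _ _ _ => rfl, fun ℓ i hi => CML.encoder_eq_sat K ⟨hnot, hand, hexge⟩ i ℓ hi⟩
end

section
/- If a CML sub-formula φ_ℓ(x) = ∃^{≥N} y (R_j(y,x) ∧ φ_k(y)) and the (i−1)-th layer representations correctly encode φ_k in component k for all entities, then setting (A_{R_j})_{kℓ}=1 and b_ℓ=−N+1 with activation σ(x)=min(max(0,x),1) yields (e_v^i)_ℓ = 1 if the number of R_j-neighbors u of v satisfying φ_k is at least N, and 0 otherwise. -/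
attribute [local instance] Classical.propDecidable

/-! With 0/1 inputs the pre-activation is the integer `c - N + 1`, where `c` counts the
`φₖ`-neighbours, and on integers the truncated ReLU is the indicator of positivity. -/

theorem trunc_intCast (z : ℤ) : trunc z = if 0 < z then 1 else 0 := by
  unfold trunc
  split_ifs with hz
  · have hz' : (1 : ℝ) ≤ z := by exact_mod_cast hz
    rw [max_eq_right (by linarith), min_eq_right hz']
  · have hz' : (z : ℝ) ≤ 0 := by exact_mod_cast not_lt.mp hz
    rw [max_eq_left hz', min_eq_left zero_le_one]

theorem trunc_natCast_add_neg_add_one (c N : ℕ) :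
    trunc ((c : ℝ) + (-(N : ℝ) + 1)) = if N ≤ c then 1 else 0 := by
  have hcast : (c : ℝ) + (-(N : ℝ) + 1) = ((c - N + 1 : ℤ) : ℝ) := by push_cast; ring
  rw [hcast, trunc_intCast]
  exact if_congr (by omega) rfl rfl

/-- counting-quantifier case of the GNN layer. With
`(A_{R_j})_{kℓ} = 1` and `b_ℓ = -N+1`, the truncated-ReLU of the sum over
`R_j`-neighbors of the (correct) component `k` is `1` iff at least `N`
neighbors satisfy `φₖ`. -/
theorem gnn_layer_exge {V Rel P : Type} [Fintype V] (K : KG V Rel P)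
    (N : ℕ) (r : Rel) (φk : CML Rel P) (v : V) (g : V → ℝ)
    (hg : ∀ u : V, g u = if CML.sat K φk u then 1 else 0) :
    trunc ((∑ u ∈ K.nbrs r v, g u * 1) + (-(N : ℝ) + 1)) =
      if CML.sat K (CML.exge N r φk) v then 1 else 0 := by
  have hcount : ∑ u ∈ K.nbrs r v, g u * 1 = ((K.nbrs r v).filter (CML.sat K φk)).card := by
    simp only [mul_one, hg, Finset.sum_boole]
  rw [hcount, trunc_natCast_add_neg_add_one]
  exact if_congr Iff.rfl rfl rfl
end

section
/- For two knowledge graphs K and K' with entities v in K and v' in K', and any L ∈ ℕ, the relational Weisfeiler-Lehman color refinement assigns the same color to v and v' at round L if and only if there is an isomorphism between the depth-L unraveling trees Unr_K^L(v) and Unr_{K'}^L(v') mapping v to v'. -/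
attribute [local instance] Classical.propDecidable

/-- Canonical relational WL colors: with an injective hash, the round-`L` color
of an entity is determined by (and determines) the pair of its previous color
and, for each relation, the multiset of previous colors of its in-neighbors. -/
def WLColor (Rel P : Type) : ℕ → Type
  | 0 => Set P
  | L + 1 => WLColor Rel P L × (Rel → Multiset (WLColor Rel P L))

/-- The relational WL color refinement `c^L(v)`. -/
noncomputable def KG.wl {V Rel P : Type} [Fintype V] (K : KG V Rel P) :
    (L : ℕ) → V → WLColor Rel P L
  | 0, v => ({p | K.pred p v} : Set P)
  | L + 1, v => (K.wl L v, fun r => (K.nbrs r v).val.map (K.wl L))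

/-!
Induction on `L`. A WL color and an unraveling tree are built by the same recursion over the
multisets of in-neighbours, so the children agree by the induction hypothesis. The one asymmetry
is that a color stores the previous color while a tree stores only its root predicates; the
previous tree is recovered because equal depth-`(L+1)` trees have equal depth-`L` truncations.
-/

theorem Multiset.map_eq_map_of_forall_imp {α β γ δ : Type*} {s : Multiset α} {t : Multiset β}
    {f : α → γ} {g : β → γ} {f' : α → δ} {g' : β → δ}
    (h : ∀ a ∈ s, ∀ b ∈ t, f a = g b → f' a = g' b) (hst : s.map f = t.map g) :
    s.map f' = t.map g' := by
  rw [← Multiset.rel_eq, Multiset.rel_map] at hst ⊢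
  exact hst.mono h

namespace KG

variable {V V' Rel P : Type} [Fintype V] [Fintype V'] {K : KG V Rel P} {K' : KG V' Rel P}

theorem pred_eq_of_unravel_eq {v : V} {v' : V'} :
    ∀ {L : ℕ}, K.unravel L v = K'.unravel L v' →
      ({p | K.pred p v} : Set P) = {p | K'.pred p v'}
  | 0, h => h
  | _ + 1, h => congrArg Prod.fst h

theorem unravel_eq_of_unravel_succ_eq {L : ℕ} {v : V} {v' : V'}
    (h : K.unravel (L + 1) v = K'.unravel (L + 1) v') : K.unravel L v = K'.unravel L v' := by
  induction L generalizing v v' with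
  | zero => exact pred_eq_of_unravel_eq h
  | succ L ih =>
    refine Prod.ext (pred_eq_of_unravel_eq h) (funext fun r => ?_)
    exact Multiset.map_eq_map_of_forall_imp (fun _ _ _ _ => ih) (congrFun (congrArg Prod.snd h) r)

end KG

/-- two entities get the same relational WL color at round `L`
iff their depth-`L` unraveling trees are isomorphic via a root-preserving
isomorphism (i.e. have equal canonical representations). -/
theorem wl_color_eq_iff_unravel_iso {V V' Rel P : Type} [Fintype V] [Fintype V']
    (K : KG V Rel P) (K' : KG V' Rel P) (v : V) (v' : V') (L : ℕ) :
    K.wl L v = K'.wl L v' ↔ K.unravel L v = K'.unravel L v' := by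
  induction L generalizing v v' with
  | zero => rfl
  | succ L ih =>
    have children_iff : ∀ r : Rel,
        (K.nbrs r v).val.map (K.wl L) = (K'.nbrs r v').val.map (K'.wl L) ↔
          (K.nbrs r v).val.map (K.unravel L) = (K'.nbrs r v').val.map (K'.unravel L) :=
      fun r => ⟨Multiset.map_eq_map_of_forall_imp fun a _ b _ => (ih a b).1,
        Multiset.map_eq_map_of_forall_imp fun a _ b _ => (ih a b).2⟩
    constructor
    · intro h
      exact Prod.ext (KG.pred_eq_of_unravel_eq ((ih v v').1 (congrArg Prod.fst h)))
        (funext fun r => (children_iff r).1 (congrFun (congrArg Prod.snd h) r))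
    · intro h
      exact Prod.ext ((ih v v').2 (KG.unravel_eq_of_unravel_succ_eq h))
        (funext fun r => (children_iff r).2 (congrFun (congrArg Prod.snd h) r))
end

section
/- If two rooted entities in two knowledge graphs receive the same relational WL color at round L, then the depth-L unraveling trees of those entities are isomorphic via an isomorphism sending one root to the other. -/
/-! The WL color `c^L(v)` determines the unraveling tree `Unr^L(v)`: both are built by the same
recursion over in-neighbors, except that the color also keeps the whole previous color of `v`,
from which only its atomic predicates (stored in the round-0 color) are needed. So the unraveling
tree is the image of the color under a fixed map `WLColor.toUTree`. -/

attribute [local instance] Classical.propDecidable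

def WLColor.preds {Rel P : Type} : (L : ℕ) → WLColor Rel P L → Set P
  | 0, c => c
  | L + 1, c => WLColor.preds L c.1

def WLColor.toUTree {Rel P : Type} : (L : ℕ) → WLColor Rel P L → UTree Rel P L
  | 0, c => c
  | L + 1, c => (WLColor.preds (L + 1) c, fun r => (c.2 r).map (WLColor.toUTree L))

namespace KG

variable {V Rel P : Type} [Fintype V] (K : KG V Rel P)

lemma preds_wl (L : ℕ) (v : V) : WLColor.preds L (K.wl L v) = {p | K.pred p v} := by
  induction L with
  | zero => rfl
  | succ L ih => exact ih

lemma unravel_eq_toUTree_wl (L : ℕ) (v : V) : K.unravel L v = WLColor.toUTree L (K.wl L v) := by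
  induction L generalizing v with
  | zero => rfl
  | succ L ih =>
    refine Prod.ext (K.preds_wl (L + 1) v).symm (funext fun r => ?_)
    change (K.nbrs r v).val.map (K.unravel L) = ((K.nbrs r v).val.map (K.wl L)).map _
    rw [Multiset.map_map]
    exact Multiset.map_congr rfl fun u _ => ih u

end KG

/-- same relational WL color at round `L` implies isomorphic
depth-`L` unraveling trees (root sent to root). -/
theorem wl_color_eq_implies_unravel_iso {V V' Rel P : Type} [Fintype V] [Fintype V']
    (K : KG V Rel P) (K' : KG V' Rel P) (v : V) (v' : V') (L : ℕ)
    (h : K.wl L v = K'.wl L v') : K.unravel L v = K'.unravel L v' := by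
  rw [K.unravel_eq_toUTree_wl, K'.unravel_eq_toUTree_wl, h]
end

section
/- If the depth-L unraveling trees of v in K and v' in K' are isomorphic via an isomorphism sending v to v', then the relational WL refinement assigns the same color to v and v' at round L. -/
attribute [local instance] Classical.propDecidable

/-!
The relational WL colour of round `L` can be computed from the depth-`L` unraveling tree alone:
the multisets of children's colours are read off the subtrees, and the previous colour of the
root from the tree cut down to depth `L - 1`. Equal trees therefore give equal colours.
-/

namespace UTree

variable {Rel P : Type}

def trunc : (L : ℕ) → UTree Rel P (L + 1) → UTree Rel P L
  | 0, t => t.1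
  | L + 1, t => (t.1, fun r => (t.2 r).map (trunc L))

def toWLColor : (L : ℕ) → UTree Rel P L → WLColor Rel P L
  | 0, t => t
  | L + 1, t => (toWLColor L (trunc L t), fun r => (t.2 r).map (toWLColor L))

end UTree

namespace KG

variable {V Rel P : Type} [Fintype V] (K : KG V Rel P)

theorem trunc_unravel (L : ℕ) (v : V) : (K.unravel (L + 1) v).trunc L = K.unravel L v := by
  induction L generalizing v with
  | zero => rfl
  | succ L ih =>
    refine Prod.ext rfl (funext fun r => ?_)
    change ((K.nbrs r v).val.map (K.unravel (L + 1))).map (UTree.trunc L) = _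
    rw [Multiset.map_map]
    exact Multiset.map_congr rfl fun u _ => ih u

theorem wl_eq_toWLColor_unravel (L : ℕ) (v : V) : K.wl L v = (K.unravel L v).toWLColor L := by
  induction L generalizing v with
  | zero => rfl
  | succ L ih =>
    refine Prod.ext ((ih v).trans (congrArg _ (K.trunc_unravel L v).symm)) (funext fun r => ?_)
    change (K.nbrs r v).val.map (K.wl L) = ((K.nbrs r v).val.map (K.unravel L)).map _
    rw [Multiset.map_map]
    exact Multiset.map_congr rfl fun u _ => ih u

end KG

/-- isomorphic depth-`L` unraveling trees (root sent to root)
imply the same relational WL color at round `L`. -/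
theorem unravel_iso_implies_wl_color_eq {V V' Rel P : Type} [Fintype V] [Fintype V']
    (K : KG V Rel P) (K' : KG V' Rel P) (v : V) (v' : V') (L : ℕ)
    (h : K.unravel L v = K'.unravel L v') : K.wl L v = K'.wl L v' := by
  rw [K.wl_eq_toWLColor_unravel, K'.wl_eq_toWLColor_unravel, h]
end
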